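/- For every integer q ≥ 1: every finite connected simple graph G with ind-match(G) = 1, min-match(G) = q and match(G) = 2q has at least (2q+1 choose 2) edges, and there exists a finite connected simple graph G with ind-match(G) = 1, min-match(G) = q, match(G) = 2q and exactly (2q+1 choose 2) edges. (That is, the minimum number of edges of such graphs is (2q+1 choose 2).) -/

import Mathlib

variable {V : Type*}

/-- A matching of `G`: a set of edges of `G` that are pairwise disjoint. -/
def IsMatchingSet (G : SimpleGraph V) (M : Set (Sym2 V)) : Prop :=
  (∀ e ∈ M, e ∈ G.edgeSet) ∧
    ∀ e ∈ M, ∀ f ∈ M, e ≠ f → ∀ v : V, v ∈ e → v ∉ f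

/-- A maximal matching of `G`: a matching `M` such that `M ∪ {e}` is not a matching
for every edge `e` of `G` not in `M`. -/
def IsMaximalMatchingSet (G : SimpleGraph V) (M : Set (Sym2 V)) : Prop :=
  IsMatchingSet G M ∧
    ∀ e ∈ G.edgeSet, e ∉ M → ¬ IsMatchingSet G (insert e M)

/-- An induced matching of `G`: a matching `M` such that no edge of `G` meets
two distinct edges of `M`. -/
def IsInducedMatchingSet (G : SimpleGraph V) (M : Set (Sym2 V)) : Prop :=
  IsMatchingSet G M ∧
    ∀ e ∈ M, ∀ f ∈ M, e ≠ f → ∀ g ∈ G.edgeSet,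
      ¬ ((∃ v : V, v ∈ g ∧ v ∈ e) ∧ (∃ v : V, v ∈ g ∧ v ∈ f))

/-- The matching number of `G`: the maximum size of a matching. -/
noncomputable def matchNum (G : SimpleGraph V) : ℕ :=
  sSup {n | ∃ M : Set (Sym2 V), IsMatchingSet G M ∧ M.ncard = n}

/-- The minimum matching number of `G`: the minimum size of a maximal matching. -/
noncomputable def minMatchNum (G : SimpleGraph V) : ℕ :=
  sInf {n | ∃ M : Set (Sym2 V), IsMaximalMatchingSet G M ∧ M.ncard = n}

/-- The induced matching number of `G`: the maximum size of an induced matching. -/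
noncomputable def indMatchNum (G : SimpleGraph V) : ℕ :=
  sSup {n | ∃ M : Set (Sym2 V), IsInducedMatchingSet G M ∧ M.ncard = n}

/-!
Lower bound: take a maximum matching `M`, with `2q` edges. As `ind-match(G) = 1`, any two edges
of `M` are joined by an edge of `G`, while an edge of `G` meets at most two edges of `M`. So
sending an edge to the set of edges of `M` it meets maps `E(G)` onto the singletons and the pairs
of `M`, and `|E(G)| ≥ 2q + C(2q, 2) = C(2q + 1, 2)`.

Extremal graph: `corona (Fin q × Bool)`, the complete graph on the `2q` vertices `inl a` with a
pendant vertex `inr a` attached to each. Every edge contains a clique vertex, which gives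
`match = 2q` and `ind-match = 1`. A maximal matching covers every clique vertex (otherwise the
pendant edge there could be added), so it has at least `q` edges, and a perfect matching of the
clique has exactly `q`. The edges correspond to the unordered pairs with repetition of clique
vertices, the pair `{a, a}` standing for the pendant edge at `a`; there are `C(2q + 1, 2)` of them.
-/

open scoped Finset

section Matchings

open scoped Classical

variable {V : Type*} {G : SimpleGraph V} {M N : Set (Sym2 V)}

lemma IsMatchingSet.mono (hM : IsMatchingSet G M) (h : N ⊆ M) : IsMatchingSet G N :=
  ⟨fun e he => hM.1 e (h he), fun e he f hf => hM.2 e (h he) f (h hf)⟩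

lemma IsMatchingSet.eq_of_mem (hM : IsMatchingSet G M) {e f : Sym2 V} (he : e ∈ M) (hf : f ∈ M)
    {v : V} (hve : v ∈ e) (hvf : v ∈ f) : e = f :=
  by_contra fun hne => hM.2 e he f hf hne v hve hvf

lemma IsMatchingSet.insert (hM : IsMatchingSet G M) {e : Sym2 V} (he : e ∈ G.edgeSet)
    (hfree : ∀ f ∈ M, ∀ v ∈ e, v ∉ f) : IsMatchingSet G (insert e M) := by
  refine ⟨?_, ?_⟩
  · rintro f (rfl | hf)
    exacts [he, hM.1 f hf]
  · rintro f (rfl | hf) f' (rfl | hf') hne v hv hv'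
    exacts [hne rfl, hfree f' hf' v hv hv', hfree f hf v hv' hv, hM.2 f hf f' hf' hne v hv hv']

lemma IsMatchingSet.card_filter_mem_le_one (hM : IsMatchingSet G M) {s : Finset (Sym2 V)}
    (hs : ↑s ⊆ M) (v : V) : #{e ∈ s | v ∈ e} ≤ 1 := by
  refine Finset.card_le_one.2 fun e he f hf => ?_
  rw [Finset.mem_filter] at he hf
  exact hM.eq_of_mem (hs he.1) (hs hf.1) he.2 hf.2

lemma IsMatchingSet.card_filter_meets_le_two (hM : IsMatchingSet G M)
    {s : Finset (Sym2 V)} (hs : ↑s ⊆ M) (g : Sym2 V) :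
    #{e ∈ s | ∃ v, v ∈ g ∧ v ∈ e} ≤ 2 := by
  induction g using Sym2.ind with
  | _ x y =>
    calc #{e ∈ s | ∃ v, v ∈ s(x, y) ∧ v ∈ e}
        ≤ #({e ∈ s | x ∈ e} ∪ {e ∈ s | y ∈ e}) := by
          refine Finset.card_le_card fun e => ?_
          simp only [Finset.mem_filter, Finset.mem_union]
          rintro ⟨he, v, hv, hve⟩
          rcases Sym2.mem_iff.1 hv with rfl | rfl <;> tauto
      _ ≤ 1 + 1 := (Finset.card_union_le _ _).trans
          (add_le_add (hM.card_filter_mem_le_one hs x) (hM.card_filter_mem_le_one hs y))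

lemma IsMatchingSet.filter_meets_eq_singleton (hM : IsMatchingSet G M) {s : Finset (Sym2 V)}
    (hs : ↑s ⊆ M) {e : Sym2 V} (he : e ∈ s) : {f ∈ s | ∃ v, v ∈ e ∧ v ∈ f} = {e} := by
  refine Finset.eq_singleton_iff_unique_mem.2
    ⟨Finset.mem_filter.2 ⟨he, e.out.1, Sym2.out_fst_mem e, Sym2.out_fst_mem e⟩, fun f hf => ?_⟩
  obtain ⟨hf, v, hve, hvf⟩ := Finset.mem_filter.1 hf
  exact (hM.eq_of_mem (hs he) (hs hf) hve hvf).symm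

lemma ncard_le_two_mul_ncard_of_forall_exists_mem {S : Set V} (hM : M.Finite)
    (h : ∀ v ∈ S, ∃ e ∈ M, v ∈ e) : S.ncard ≤ 2 * M.ncard := by
  calc S.ncard ≤ #(hM.toFinset.biUnion Sym2.toFinset) := by
        rw [← Set.ncard_coe_finset]
        refine Set.ncard_le_ncard (fun v hv => ?_) (Finset.finite_toSet _)
        obtain ⟨e, he, hve⟩ := h v hv
        exact Finset.mem_biUnion.2 ⟨e, hM.mem_toFinset.2 he, Sym2.mem_toFinset.2 hve⟩
    _ ≤ #hM.toFinset * 2 := Finset.card_biUnion_le_card_mul _ _ _ fun e _ => by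
        rw [Sym2.card_toFinset]; split_ifs <;> omega
    _ = 2 * M.ncard := by rw [mul_comm, Set.ncard_eq_toFinset_card M hM]

variable [Finite V]

lemma bddAbove_ncard (P : Set (Sym2 V) → Prop) :
    BddAbove {n | ∃ M : Set (Sym2 V), P M ∧ M.ncard = n} :=
  ⟨Nat.card (Sym2 V), by rintro _ ⟨M, -, rfl⟩; exact Set.ncard_le_card M⟩

lemma exists_isMatchingSet_ncard_eq_matchNum :
    ∃ M : Set (Sym2 V), IsMatchingSet G M ∧ M.ncard = matchNum G :=
  Nat.sSup_mem (s := {n | ∃ M, IsMatchingSet G M ∧ M.ncard = n})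
    ⟨0, ∅, ⟨by simp, by simp⟩, Set.ncard_empty _⟩ (bddAbove_ncard _)

lemma le_indMatchNum (hM : IsInducedMatchingSet G M) : M.ncard ≤ indMatchNum G :=
  le_csSup (bddAbove_ncard _) ⟨M, hM, rfl⟩

lemma exists_meets_of_indMatchNum_le_one (hind : indMatchNum G ≤ 1) (hM : IsMatchingSet G M)
    {e f : Sym2 V} (he : e ∈ M) (hf : f ∈ M) (hef : e ≠ f) :
    ∃ g ∈ G.edgeSet, (∃ v, v ∈ g ∧ v ∈ e) ∧ (∃ v, v ∈ g ∧ v ∈ f) := by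
  by_contra hno
  have hpair : IsInducedMatchingSet G {e, f} := by
    refine ⟨hM.mono (Set.insert_subset he (Set.singleton_subset_iff.2 hf)), ?_⟩
    rintro e' (rfl | rfl) f' (rfl | rfl) hne g hg ⟨hge, hgf⟩ <;>
      first | exact hne rfl | exact hno ⟨g, hg, hge, hgf⟩ | exact hno ⟨g, hg, hgf, hge⟩
  have := le_indMatchNum hpair
  rw [Set.ncard_pair hef] at this
  omega

lemma exists_filter_meets_eq_pair (hind : indMatchNum G ≤ 1) (hM : IsMatchingSet G M)
    {s : Finset (Sym2 V)} (hs : ↑s ⊆ M) {e f : Sym2 V} (he : e ∈ s) (hf : f ∈ s) (hef : e ≠ f) :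
    ∃ g ∈ G.edgeSet, {x ∈ s | ∃ v, v ∈ g ∧ v ∈ x} = {e, f} := by
  obtain ⟨g, hg, hge, hgf⟩ := exists_meets_of_indMatchNum_le_one hind hM (hs he) (hs hf) hef
  refine ⟨g, hg, (Finset.eq_of_subset_of_card_le ?_ ?_).symm⟩
  · simp only [Finset.insert_subset_iff, Finset.singleton_subset_iff, Finset.mem_filter]
    exact ⟨⟨he, hge⟩, hf, hgf⟩
  · rw [Finset.card_pair hef]
    exact hM.card_filter_meets_le_two hs g

theorem choose_ncard_add_one_two_le_ncard_edgeSet (hind : indMatchNum G ≤ 1)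
    (hM : IsMatchingSet G M) : (M.ncard + 1).choose 2 ≤ G.edgeSet.ncard := by
  set s := M.toFinite.toFinset
  have hs : (s : Set (Sym2 V)) = M := M.toFinite.coe_toFinset
  have hsurj : ↑(s.powersetCard 1 ∪ s.powersetCard 2) ⊆
      (fun g => {e ∈ s | ∃ v, v ∈ g ∧ v ∈ e}) '' G.edgeSet := by
    intro S hS
    simp only [Finset.coe_union, Set.mem_union, Finset.mem_coe, Finset.mem_powersetCard,
      Finset.card_eq_one, Finset.card_eq_two] at hS
    rcases hS with ⟨hSs, e, rfl⟩ | ⟨hSs, e, f, hef, rfl⟩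
    · have he := hSs (Finset.mem_singleton_self e)
      exact ⟨e, hM.1 e (hs ▸ he), hM.filter_meets_eq_singleton hs.le he⟩
    · exact exists_filter_meets_eq_pair hind hM hs.le (hSs (by simp)) (hSs (by simp)) hef
  have hdisj : Disjoint (s.powersetCard 1) (s.powersetCard 2) :=
    Finset.disjoint_left.2 fun S h1 h2 =>
      absurd ((Finset.mem_powersetCard.1 h1).2.symm.trans (Finset.mem_powersetCard.1 h2).2)
        (by norm_num)
  calc (M.ncard + 1).choose 2 = #(s.powersetCard 1 ∪ s.powersetCard 2) := by
        rw [Finset.card_union_of_disjoint hdisj, Finset.card_powersetCard,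
          Finset.card_powersetCard, ← Set.ncard_coe_finset, hs, Nat.choose_succ_succ',
          Nat.choose_one_right]
    _ ≤ _ := (Set.ncard_coe_finset _).symm.le.trans (Set.ncard_le_ncard hsurj (Set.toFinite _))
    _ ≤ G.edgeSet.ncard := Set.ncard_image_le (Set.toFinite _)

theorem choose_matchNum_add_one_two_le_ncard_edgeSet (hind : indMatchNum G ≤ 1) :
    (matchNum G + 1).choose 2 ≤ G.edgeSet.ncard := by
  obtain ⟨M, hM, hMcard⟩ := exists_isMatchingSet_ncard_eq_matchNum (G := G)
  exact hMcard ▸ choose_ncard_add_one_two_le_ncard_edgeSet hind hM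

end Matchings

section Iso

variable {V W : Type*} {G : SimpleGraph V} {G' : SimpleGraph W} {M : Set (Sym2 V)}

lemma Sym2.exists_mem_mem_of_map {f : V → W} (hf : Function.Injective f) {e e' : Sym2 V}
    (h : ∃ w, w ∈ e.map f ∧ w ∈ e'.map f) : ∃ v, v ∈ e ∧ v ∈ e' := by
  obtain ⟨w, hw, hw'⟩ := h
  obtain ⟨v, hv, rfl⟩ := Sym2.mem_map.1 hw
  obtain ⟨v', hv', hvv'⟩ := Sym2.mem_map.1 hw'
  exact ⟨v, hv, hf hvv' ▸ hv'⟩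

lemma image_map_symm_image_map (φ : G ≃g G') (M : Set (Sym2 V)) :
    Sym2.map φ.symm '' (Sym2.map φ '' M) = M := by
  simp [Set.image_image, Sym2.map_map]

lemma IsMatchingSet.image (φ : G ≃g G') (hM : IsMatchingSet G M) :
    IsMatchingSet G' (Sym2.map φ '' M) := by
  refine ⟨?_, ?_⟩
  · rintro _ ⟨e, he, rfl⟩
    exact φ.map_mem_edgeSet_iff.2 (hM.1 e he)
  · rintro _ ⟨e, he, rfl⟩ _ ⟨f, hf, rfl⟩ hne w hwe hwf
    obtain ⟨v, hve, hvf⟩ := Sym2.exists_mem_mem_of_map φ.injective ⟨w, hwe, hwf⟩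
    exact hM.2 e he f hf (ne_of_apply_ne _ hne) v hve hvf

lemma IsInducedMatchingSet.image (φ : G ≃g G') (hM : IsInducedMatchingSet G M) :
    IsInducedMatchingSet G' (Sym2.map φ '' M) := by
  refine ⟨hM.1.image φ, ?_⟩
  rintro _ ⟨e, he, rfl⟩ _ ⟨f, hf, rfl⟩ hne g hg ⟨hge, hgf⟩
  have hg' : g = Sym2.map φ (Sym2.map φ.symm g) := by simp [Sym2.map_map]
  rw [hg'] at hge hgf
  exact hM.2 e he f hf (ne_of_apply_ne _ hne) _ (φ.symm.map_mem_edgeSet_iff.2 hg)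
    ⟨Sym2.exists_mem_mem_of_map φ.injective hge, Sym2.exists_mem_mem_of_map φ.injective hgf⟩

lemma IsMaximalMatchingSet.image (φ : G ≃g G') (hM : IsMaximalMatchingSet G M) :
    IsMaximalMatchingSet G' (Sym2.map φ '' M) := by
  refine ⟨hM.1.image φ, fun e he heM hins => ?_⟩
  have hins' := hins.image φ.symm
  rw [Set.image_insert_eq, image_map_symm_image_map] at hins'
  refine hM.2 _ (φ.symm.map_mem_edgeSet_iff.2 he) (fun h => heM ⟨_, h, ?_⟩) hins'
  simp [Sym2.map_map]

lemma setOf_ncard_subset_of_image {P : Set (Sym2 V) → Prop} {Q : Set (Sym2 W) → Prop}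
    {f : V → W} (hf : Function.Injective f) (h : ∀ M, P M → Q (Sym2.map f '' M)) :
    {n | ∃ M, P M ∧ M.ncard = n} ⊆ {n | ∃ M, Q M ∧ M.ncard = n} := by
  rintro _ ⟨M, hM, rfl⟩
  exact ⟨_, h M hM, Set.ncard_image_of_injective M (Sym2.map.injective hf)⟩

lemma matchNum_eq_of_iso (φ : G ≃g G') : matchNum G = matchNum G' :=
  congrArg sSup <| (setOf_ncard_subset_of_image φ.injective fun _ h => h.image φ).antisymm
    (setOf_ncard_subset_of_image φ.symm.injective fun _ h => h.image φ.symm)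

lemma indMatchNum_eq_of_iso (φ : G ≃g G') : indMatchNum G = indMatchNum G' :=
  congrArg sSup <| (setOf_ncard_subset_of_image φ.injective fun _ h => h.image φ).antisymm
    (setOf_ncard_subset_of_image φ.symm.injective fun _ h => h.image φ.symm)

lemma minMatchNum_eq_of_iso (φ : G ≃g G') : minMatchNum G = minMatchNum G' :=
  congrArg sInf <| (setOf_ncard_subset_of_image φ.injective fun _ h => h.image φ).antisymm
    (setOf_ncard_subset_of_image φ.symm.injective fun _ h => h.image φ.symm)

lemma ncard_edgeSet_eq_of_iso (φ : G ≃g G') : G.edgeSet.ncard = G'.edgeSet.ncard := by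
  rw [← Nat.card_coe_set_eq, Nat.card_congr φ.mapEdgeSet, Nat.card_coe_set_eq]

end Iso

section Corona

variable {α β : Type*}

variable (α) in
def corona : SimpleGraph (α ⊕ α) where
  Adj
    | .inl a, .inl b => a ≠ b
    | .inl a, .inr b => a = b
    | .inr a, .inl b => a = b
    | .inr _, .inr _ => False
  symm := ⟨by rintro (a | a) (b | b) h <;> simp_all [eq_comm]⟩
  loopless := ⟨by rintro (a | a) <;> simp⟩

@[simp] lemma corona_adj_inl_inl {a b : α} : (corona α).Adj (.inl a) (.inl b) ↔ a ≠ b := Iff.rfl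
@[simp] lemma corona_adj_inl_inr {a b : α} : (corona α).Adj (.inl a) (.inr b) ↔ a = b := Iff.rfl
@[simp] lemma corona_adj_inr_inl {a b : α} : (corona α).Adj (.inr a) (.inl b) ↔ a = b := Iff.rfl
@[simp] lemma corona_adj_inr_inr {a b : α} : ¬ (corona α).Adj (.inr a) (.inr b) := id

lemma corona_exists_inl_mem {e : Sym2 (α ⊕ α)} (he : e ∈ (corona α).edgeSet) :
    ∃ a, .inl a ∈ e := by
  induction e using Sym2.ind with
  | _ x y =>
    rcases x with a | a
    · exact ⟨a, Sym2.mem_mk_left _ _⟩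
    rcases y with b | b
    · exact ⟨b, Sym2.mem_mk_right _ _⟩
    · simp at he

lemma corona_connected [Nonempty α] : (corona α).Connected := by
  obtain ⟨a₀⟩ := ‹Nonempty α›
  have hinl (a : α) : (corona α).Reachable (.inl a₀) (.inl a) := by
    by_cases h : a₀ = a
    · rw [h]
    · exact (corona_adj_inl_inl.2 h).reachable
  refine (corona α).connected_iff_exists_forall_reachable.2 ⟨.inl a₀, ?_⟩
  rintro (a | a)
  · exact hinl a
  · exact (hinl a).trans (corona_adj_inl_inr.2 rfl).reachable

lemma isMatchingSet_corona_spokes :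
    IsMatchingSet (corona α) (Set.range fun a => s(.inl a, .inr a)) := by
  refine ⟨?_, ?_⟩
  · rintro _ ⟨a, rfl⟩
    exact corona_adj_inl_inr.2 rfl
  · rintro _ ⟨a, rfl⟩ _ ⟨b, rfl⟩ hne v hva hvb
    simp only [Sym2.mem_iff] at hva hvb
    rcases hva with rfl | rfl <;> simp_all

lemma IsMatchingSet.ncard_le_of_corona [Finite α] {M : Set (Sym2 (α ⊕ α))}
    (hM : IsMatchingSet (corona α) M) : M.ncard ≤ Nat.card α := by
  choose f hf using fun e : M => corona_exists_inl_mem (hM.1 e e.2)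
  rw [← Nat.card_coe_set_eq]
  exact Nat.card_le_card_of_injective f
    fun e e' h => Subtype.ext (hM.eq_of_mem e.2 e'.2 (hf e) (h ▸ hf e'))

lemma matchNum_corona [Finite α] : matchNum (corona α) = Nat.card α := by
  refine IsGreatest.csSup_eq ⟨⟨_, isMatchingSet_corona_spokes, ?_⟩, ?_⟩
  · exact Set.ncard_range_of_injective fun a b h => by simpa using h
  · rintro _ ⟨M, hM, rfl⟩
    exact hM.ncard_le_of_corona

lemma indMatchNum_corona [Finite α] [Nonempty α] : indMatchNum (corona α) = 1 := by
  obtain ⟨a₀⟩ := ‹Nonempty α›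
  refine IsGreatest.csSup_eq ⟨⟨{s(.inl a₀, .inr a₀)}, ⟨?_, ?_⟩, Set.ncard_singleton _⟩, ?_⟩
  · exact isMatchingSet_corona_spokes.mono (Set.singleton_subset_iff.2 ⟨a₀, rfl⟩)
  · rintro e rfl f rfl hne
    exact absurd rfl hne
  · rintro _ ⟨M, hM, rfl⟩
    refine (Set.ncard_le_one (Set.toFinite M)).2 fun e he f hf => by_contra fun hne => ?_
    obtain ⟨a, ha⟩ := corona_exists_inl_mem (hM.1.1 e he)
    obtain ⟨b, hb⟩ := corona_exists_inl_mem (hM.1.1 f hf)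
    have hab : a ≠ b := fun h => hne (hM.1.eq_of_mem he hf ha (h ▸ hb))
    exact hM.2 e he f hf hne s(.inl a, .inl b) (corona_adj_inl_inl.2 hab)
      ⟨⟨_, Sym2.mem_mk_left _ _, ha⟩, ⟨_, Sym2.mem_mk_right _ _, hb⟩⟩

lemma corona_inl_mem_of_inr_mem {e : Sym2 (α ⊕ α)} (he : e ∈ (corona α).edgeSet) {a : α}
    (ha : .inr a ∈ e) : .inl a ∈ e := by
  induction e using Sym2.ind with
  | _ x y =>
    rcases Sym2.mem_iff.1 ha with rfl | rfl
    · rcases y with b | b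
      · rw [corona_adj_inr_inl.1 he]
        exact Sym2.mem_mk_right _ _
      · simp at he
    · rcases x with b | b
      · rw [← corona_adj_inl_inr.1 he]
        exact Sym2.mem_mk_left _ _
      · simp at he

lemma IsMaximalMatchingSet.exists_inl_mem_of_corona {M : Set (Sym2 (α ⊕ α))}
    (hM : IsMaximalMatchingSet (corona α) M) (a : α) : ∃ e ∈ M, .inl a ∈ e := by
  by_contra! hno
  refine hM.2 s(.inl a, .inr a) (corona_adj_inl_inr.2 rfl)
    (fun h => hno _ h (Sym2.mem_mk_left _ _)) (hM.1.insert (corona_adj_inl_inr.2 rfl) ?_)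
  intro f hf v hv hvf
  rcases Sym2.mem_iff.1 hv with rfl | rfl
  · exact hno f hf hvf
  · exact hno f hf (corona_inl_mem_of_inr_mem (hM.1.1 f hf) hvf)

lemma isMatchingSet_corona_prod_bool :
    IsMatchingSet (corona (β × Bool))
      (Set.range fun b => s(.inl (b, false), .inl (b, true))) := by
  refine ⟨?_, ?_⟩
  · rintro _ ⟨b, rfl⟩
    exact corona_adj_inl_inl.2 (by simp)
  · rintro _ ⟨b, rfl⟩ _ ⟨b', rfl⟩ hne v hv hv'
    simp only [Sym2.mem_iff] at hv hv'
    rcases hv with rfl | rfl <;> simp_all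

lemma minMatchNum_corona_prod_bool [Finite β] :
    minMatchNum (corona (β × Bool)) = Nat.card β := by
  refine IsLeast.csInf_eq ⟨⟨_, ⟨isMatchingSet_corona_prod_bool, ?_⟩, ?_⟩, ?_⟩
  · intro e he heM hins
    obtain ⟨⟨b, c⟩, hbc⟩ := corona_exists_inl_mem he
    have hf : s(.inl (b, false), .inl (b, true)) ∈ Set.range fun b : β =>
        s((.inl (b, false) : (β × Bool) ⊕ (β × Bool)), .inl (b, true)) := ⟨b, rfl⟩
    exact hins.2 e (Set.mem_insert _ _) _ (Set.mem_insert_of_mem _ hf) (fun h => heM (h ▸ hf))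
      _ hbc (by cases c <;> simp)
  · exact Set.ncard_range_of_injective fun b b' h => by simpa using h
  · rintro _ ⟨M, hM, rfl⟩
    have hcover := ncard_le_two_mul_ncard_of_forall_exists_mem (S := Set.range .inl)
      M.toFinite (by rintro _ ⟨a, rfl⟩; exact hM.exists_inl_mem_of_corona a)
    rw [Set.ncard_range_of_injective Sum.inl_injective, Nat.card_prod,
      Nat.card_eq_fintype_card (α := Bool), Fintype.card_bool] at hcover
    omega

def coronaEdge [DecidableEq α] : Sym2 α → Sym2 (α ⊕ α) :=
  Sym2.lift ⟨fun a b => if a = b then s(.inl a, .inr a) else s(.inl a, .inl b), by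
    intro a b
    by_cases h : a = b
    · subst h; rfl
    · simp [h, Ne.symm h, Sym2.eq_swap]⟩

lemma coronaEdge_injective [DecidableEq α] : Function.Injective (coronaEdge (α := α)) := by
  intro z w h
  induction z using Sym2.ind with | _ a b => ?_
  induction w using Sym2.ind with | _ c d => ?_
  simp only [coronaEdge, Sym2.lift_mk] at h
  split_ifs at h <;> simp_all

lemma range_coronaEdge [DecidableEq α] :
    Set.range (coronaEdge (α := α)) = (corona α).edgeSet := by
  refine subset_antisymm ?_ fun e he => ?_
  · rintro _ ⟨z, rfl⟩
    induction z using Sym2.ind with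
    | _ a b => by_cases h : a = b <;> simp [coronaEdge, h]
  · induction e using Sym2.ind with
    | _ x y =>
      rcases x with a | a <;> rcases y with b | b
      · exact ⟨s(a, b), by simp [coronaEdge, corona_adj_inl_inl.1 he]⟩
      · exact ⟨s(a, a), by simp [coronaEdge, corona_adj_inl_inr.1 he]⟩
      · exact ⟨s(b, b), by simp [coronaEdge, corona_adj_inr_inl.1 he, Sym2.eq_swap]⟩
      · simp at he

lemma ncard_edgeSet_corona : (corona α).edgeSet.ncard = (Nat.card α + 1).choose 2 := by
  classical
  rw [← range_coronaEdge, Set.ncard_range_of_injective coronaEdge_injective, Sym2.natCard]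

end Corona

theorem stmt_6 (q : ℕ) (hq : 1 ≤ q) :
    (∀ (V : Type) [Fintype V] (G : SimpleGraph V), G.Connected →
      indMatchNum G = 1 → minMatchNum G = q → matchNum G = 2 * q →
      Nat.choose (2 * q + 1) 2 ≤ G.edgeSet.ncard) ∧
    (∃ (n : ℕ) (G : SimpleGraph (Fin n)), G.Connected ∧
      indMatchNum G = 1 ∧ minMatchNum G = q ∧ matchNum G = 2 * q ∧
      G.edgeSet.ncard = Nat.choose (2 * q + 1) 2) := by
  refine ⟨fun V _ G _ hind _ hmat => hmat ▸ choose_matchNum_add_one_two_le_ncard_edgeSet hind.le,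
    ?_⟩
  have : Nonempty (Fin q) := ⟨⟨0, hq⟩⟩
  let φ := (corona (Fin q × Bool)).overFinIso rfl
  refine ⟨_, _, φ.connected_iff.1 corona_connected, ?_, ?_, ?_, ?_⟩
  · rw [← indMatchNum_eq_of_iso φ, indMatchNum_corona]
  · rw [← minMatchNum_eq_of_iso φ, minMatchNum_corona_prod_bool, Nat.card_fin]
  · rw [← matchNum_eq_of_iso φ, matchNum_corona]
    simp [mul_comm]
  · rw [← ncard_edgeSet_eq_of_iso φ, ncard_edgeSet_corona]
    simp [mul_comm]
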